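/- arXiv:2301.09118 — 2 statements merged into one kernel-verified Lean document; each statement's English description precedes it below -/
import Mathlib

section
/- Define ε(z) = (1/(2i)) · cot(πz). For all complex x, y such that 2x, 2y, and x+y are not integers, ε(2x)ε(y) + ε(x)ε(2y) + ε(2x)ε(x+y) + ε(2y)ε(x+y) − 2ε(2x)ε(2y) − ε(x)ε(y) = 1/4. -/
open Complex Real
/-- ε(z) = (1/(2i)) · cot(πz). -/
noncomputable def eps (z : ℂ) : ℂ := 1 / (2 * Complex.I) * Complex.cot ((Real.pi : ℂ) * z)

lemma exp_ne_one' {z : ℂ} (hz : ¬ ∃ k : ℤ, z = k) :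
    Complex.exp (2 * (Real.pi : ℂ) * Complex.I * z) ≠ 1 := by
  intro h
  rw [Complex.exp_eq_one_iff] at h
  obtain ⟨n, hn⟩ := h
  apply hz
  refine ⟨n, ?_⟩
  have hπ : ((Real.pi : ℂ)) ≠ 0 := by exact_mod_cast Real.pi_ne_zero
  have h2 : (2 * (Real.pi : ℂ) * Complex.I) ≠ 0 := by
    simp [hπ, Complex.I_ne_zero]
  apply mul_left_cancel₀ h2
  linear_combination hn

lemma eps_eq {z : ℂ} (hz : ¬ ∃ k : ℤ, z = k) :
    eps z = (Complex.exp (2 * (Real.pi : ℂ) * Complex.I * z) + 1)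
      / (2 * (Complex.exp (2 * (Real.pi : ℂ) * Complex.I * z) - 1)) := by
  set w : ℂ := Complex.exp ((Real.pi : ℂ) * Complex.I * z) with hw
  have hsq : Complex.exp (2 * (Real.pi : ℂ) * Complex.I * z) = w ^ 2 := by
    rw [hw, sq, ← Complex.exp_add]; congr 1; ring
  have hw0 : w ≠ 0 := Complex.exp_ne_zero _
  have hw1 : w ^ 2 ≠ 1 := by rw [← hsq]; exact exp_ne_one' hz
  have e1 : Complex.exp ((Real.pi : ℂ) * z * Complex.I) = w := by
    rw [hw]; congr 1; ring
  have e2 : Complex.exp (-((Real.pi : ℂ) * z) * Complex.I) = w⁻¹ := by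
    rw [hw, ← Complex.exp_neg]; congr 1; ring
  have hcos : Complex.cos ((Real.pi : ℂ) * z) = (w ^ 2 + 1) / (2 * w) := by
    rw [Complex.cos, e1, e2]
    field_simp
  have hsin : Complex.sin ((Real.pi : ℂ) * z) = (1 - w ^ 2) * Complex.I / (2 * w) := by
    rw [Complex.sin, e1, e2]
    field_simp
  have hw1' : w ^ 2 - 1 ≠ 0 := sub_ne_zero.mpr hw1
  have hw1'' : 1 - w ^ 2 ≠ 0 := fun h => hw1 (by linear_combination -h)
  rw [eps, Complex.cot, hcos, hsin, hsq]
  rw [div_div_div_eq]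
  field_simp
  linear_combination (w^4 - 1) * Complex.I_sq
theorem key_frac (u v : ℂ) (h1 : u - 1 ≠ 0) (h2 : v - 1 ≠ 0) (h3 : u ^ 2 - 1 ≠ 0)
    (h4 : v ^ 2 - 1 ≠ 0) (h5 : u * v - 1 ≠ 0) :
    (u ^ 2 + 1) / (2 * (u ^ 2 - 1)) * ((v + 1) / (2 * (v - 1)))
      + (u + 1) / (2 * (u - 1)) * ((v ^ 2 + 1) / (2 * (v ^ 2 - 1)))
      + (u ^ 2 + 1) / (2 * (u ^ 2 - 1)) * ((u * v + 1) / (2 * (u * v - 1)))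
      + (v ^ 2 + 1) / (2 * (v ^ 2 - 1)) * ((u * v + 1) / (2 * (u * v - 1)))
      - 2 * ((u ^ 2 + 1) / (2 * (u ^ 2 - 1))) * ((v ^ 2 + 1) / (2 * (v ^ 2 - 1)))
      - (u + 1) / (2 * (u - 1)) * ((v + 1) / (2 * (v - 1)))
      = 1 / 4 := by
  have hD : (4 : ℂ) * ((u ^ 2 - 1) * (v ^ 2 - 1) * (u * v - 1)) ≠ 0 := by
    simp [h3, h4, h5]
  have e1 : (u ^ 2 + 1) / (2 * (u ^ 2 - 1)) * ((v + 1) / (2 * (v - 1)))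
      = ((u ^ 2 + 1) * (v + 1) * (v + 1) * (u * v - 1))
        / (4 * ((u ^ 2 - 1) * (v ^ 2 - 1) * (u * v - 1))) := by
    field_simp; ring
  have e2 : (u + 1) / (2 * (u - 1)) * ((v ^ 2 + 1) / (2 * (v ^ 2 - 1)))
      = ((u + 1) * (v ^ 2 + 1) * (u + 1) * (u * v - 1))
        / (4 * ((u ^ 2 - 1) * (v ^ 2 - 1) * (u * v - 1))) := by
    field_simp; ring
  have e3 : (u ^ 2 + 1) / (2 * (u ^ 2 - 1)) * ((u * v + 1) / (2 * (u * v - 1)))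
      = ((u ^ 2 + 1) * (u * v + 1) * (v ^ 2 - 1))
        / (4 * ((u ^ 2 - 1) * (v ^ 2 - 1) * (u * v - 1))) := by
    field_simp; ring
  have e4 : (v ^ 2 + 1) / (2 * (v ^ 2 - 1)) * ((u * v + 1) / (2 * (u * v - 1)))
      = ((v ^ 2 + 1) * (u * v + 1) * (u ^ 2 - 1))
        / (4 * ((u ^ 2 - 1) * (v ^ 2 - 1) * (u * v - 1))) := by
    field_simp; ring
  have e5 : 2 * ((u ^ 2 + 1) / (2 * (u ^ 2 - 1))) * ((v ^ 2 + 1) / (2 * (v ^ 2 - 1)))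
      = (2 * (u ^ 2 + 1) * (v ^ 2 + 1) * (u * v - 1))
        / (4 * ((u ^ 2 - 1) * (v ^ 2 - 1) * (u * v - 1))) := by
    field_simp; ring
  have e6 : (u + 1) / (2 * (u - 1)) * ((v + 1) / (2 * (v - 1)))
      = ((u + 1) * (v + 1) * (u + 1) * (v + 1) * (u * v - 1))
        / (4 * ((u ^ 2 - 1) * (v ^ 2 - 1) * (u * v - 1))) := by
    field_simp; ring
  rw [e1, e2, e3, e4, e5, e6, ← add_div, ← add_div, ← add_div,
    ← sub_div, ← sub_div, div_eq_div_iff hD (by norm_num : (4:ℂ) ≠ 0)]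
  ring

theorem stmt_2 (x y : ℂ)
    (hx : ¬ ∃ k : ℤ, x = k) (hy : ¬ ∃ k : ℤ, y = k)
    (h2x : ¬ ∃ k : ℤ, 2 * x = k) (h2y : ¬ ∃ k : ℤ, 2 * y = k)
    (hxy : ¬ ∃ k : ℤ, x + y = k) :
    eps (2 * x) * eps y + eps x * eps (2 * y) + eps (2 * x) * eps (x + y)
        + eps (2 * y) * eps (x + y) - 2 * eps (2 * x) * eps (2 * y) - eps x * eps y
      = 1 / 4 := by
  have hex : Complex.exp (2 * (Real.pi : ℂ) * Complex.I * (2 * x))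
      = Complex.exp (2 * (Real.pi : ℂ) * Complex.I * x) ^ 2 := by
    rw [sq, ← Complex.exp_add]; congr 1; ring
  have hey : Complex.exp (2 * (Real.pi : ℂ) * Complex.I * (2 * y))
      = Complex.exp (2 * (Real.pi : ℂ) * Complex.I * y) ^ 2 := by
    rw [sq, ← Complex.exp_add]; congr 1; ring
  have hexy : Complex.exp (2 * (Real.pi : ℂ) * Complex.I * (x + y))
      = Complex.exp (2 * (Real.pi : ℂ) * Complex.I * x)
        * Complex.exp (2 * (Real.pi : ℂ) * Complex.I * y) := by
    rw [← Complex.exp_add]; congr 1; ring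
  have h1 : Complex.exp (2 * (Real.pi : ℂ) * Complex.I * x) - 1 ≠ 0 :=
    sub_ne_zero.mpr (exp_ne_one' hx)
  have h2 : Complex.exp (2 * (Real.pi : ℂ) * Complex.I * y) - 1 ≠ 0 :=
    sub_ne_zero.mpr (exp_ne_one' hy)
  have h3 : Complex.exp (2 * (Real.pi : ℂ) * Complex.I * x) ^ 2 - 1 ≠ 0 := by
    rw [← hex]; exact sub_ne_zero.mpr (exp_ne_one' h2x)
  have h4 : Complex.exp (2 * (Real.pi : ℂ) * Complex.I * y) ^ 2 - 1 ≠ 0 := by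
    rw [← hey]; exact sub_ne_zero.mpr (exp_ne_one' h2y)
  have h5 : Complex.exp (2 * (Real.pi : ℂ) * Complex.I * x)
      * Complex.exp (2 * (Real.pi : ℂ) * Complex.I * y) - 1 ≠ 0 := by
    rw [← hexy]; exact sub_ne_zero.mpr (exp_ne_one' hxy)
  rw [eps_eq hx, eps_eq hy, eps_eq h2x, eps_eq h2y, eps_eq hxy, hex, hey, hexy]
  exact key_frac _ _ h1 h2 h3 h4 h5
end

section
/- Let G be a group acting transitively on a set X, let M be a G-module, and let F : Xⁿ → M be a G-equivariant function satisfying ∑_{i=0}^{n} (−1)^i F(x₀, …, x̂ᵢ, …, x_n) = 0 for all (x₀,…,x_n) ∈ X^{n+1}. Fix x ∈ X. Then f_x(g₁, …, g_n) := F(g₁⁻¹x, …, g_n⁻¹x) defines a homogeneous (n−1)-cocycle of G with values in M, and its cohomology class is independent of the choice of x. -/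
open Finset

namespace Stmt8Aux

def D (i j : ℕ) : ℕ := if j < i then j else j + 1

def Z {X : Type} (p q : ℕ → X) (k m : ℕ) : X := if m ≤ k then p m else q (m - 1)

lemma succAbove_val {m : ℕ} (i : Fin (m+1)) (j : Fin m) :
    ((i.succAbove j : Fin (m+1)) : ℕ) = D i j := by
  rcases Nat.lt_or_ge (j : ℕ) (i : ℕ) with h | h
  · rw [Fin.succAbove_of_castSucc_lt _ _ (by simpa [Fin.lt_def] using h)]
    simp [D, h]
  · rw [Fin.succAbove_of_le_castSucc _ _ (by simpa [Fin.le_def] using h)]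
    simp [D, Nat.not_lt.mpr h]

theorem mid {M X : Type} [AddCommGroup M] (n : ℕ)
    (F : (Fin n → X) → M) (p q : ℕ → X) (k : ℕ) :
    ((-1:ℤ)^(k+k)) • F (fun j : Fin n => Z p q k (D k (j:ℕ)))
      + ((-1:ℤ)^(k+(k+1))) • F (fun j : Fin n => Z p q k (D (k+1) (j:ℕ)))
    = F (fun j : Fin n => if (j:ℕ) < k then p (j:ℕ) else q (j:ℕ))
      - F (fun j : Fin n => if (j:ℕ) < k+1 then p (j:ℕ) else q (j:ℕ)) := by
  have e1 : (fun j : Fin n => Z p q k (D k (j:ℕ)))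
      = fun j : Fin n => if (j:ℕ) < k then p (j:ℕ) else q (j:ℕ) := by
    funext j
    by_cases hj : (j:ℕ) < k
    · simp [Z, D, hj, Nat.le_of_lt hj]
    · have h1 : ¬ ((j:ℕ)+1 ≤ k) := by omega
      simp [Z, D, hj, h1]
  have e2 : (fun j : Fin n => Z p q k (D (k+1) (j:ℕ)))
      = fun j : Fin n => if (j:ℕ) < k+1 then p (j:ℕ) else q (j:ℕ) := by
    funext j
    by_cases hj : (j:ℕ) < k+1
    · simp [Z, D, hj, Nat.lt_succ_iff.mp hj]
    · have h1 : ¬ ((j:ℕ)+1 ≤ k) := by omega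
      simp [Z, D, hj, h1]
  rw [e1, e2, Even.neg_one_pow ⟨k, rfl⟩, Odd.neg_one_pow ⟨k, by ring⟩, one_smul, neg_smul,
    one_smul, sub_eq_add_neg]

theorem cross1 {M X : Type} [AddCommGroup M] (n : ℕ)
    (F : (Fin n → X) → M) (p q : ℕ → X) (m i : ℕ) (hi : i ≤ m) :
    ((-1:ℤ)^((m+1)+i)) • F (fun j : Fin n => Z p q (m+1) (D i (j:ℕ)))
    = ((-1:ℤ)^(i+m+1)) • F (fun j : Fin n => if (j:ℕ) ≤ m then p (D i (j:ℕ)) else q (D i ((j:ℕ)-1))) := by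
  rw [show (m+1)+i = i+m+1 by omega]
  refine congrArg _ (congrArg F (funext fun j => ?_))
  rcases Nat.lt_or_ge (j:ℕ) i with hj | hj
  · have h1 : (j:ℕ) ≤ m := by omega
    have h2 : (j:ℕ) ≤ m + 1 := by omega
    simp [Z, D, hj, h1, h2]
  · rcases le_or_gt (j:ℕ) m with h1 | h1
    · have h2 : (j:ℕ)+1 ≤ m+1 := by omega
      simp [Z, D, Nat.not_lt.mpr hj, h1, h2]
    · have h2 : ¬ ((j:ℕ) < i) := by omega
      have h3 : ¬ ((j:ℕ)+1 ≤ m+1) := by omega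
      have h4 : ¬ ((j:ℕ) ≤ m) := by omega
      have h5 : ¬ ((j:ℕ) - 1 < i) := by omega
      simp only [Z, D, if_neg h2, if_neg h3, if_neg h4, if_neg h5]
      congr 1
      omega

theorem cross2 {M X : Type} [AddCommGroup M] (n : ℕ)
    (F : (Fin n → X) → M) (p q : ℕ → X) (k i : ℕ) (hi : k + 1 ≤ i) :
    ((-1:ℤ)^(k+(i+1))) • F (fun j : Fin n => Z p q k (D (i+1) (j:ℕ)))
    = ((-1:ℤ)^(i+k+1)) • F (fun j : Fin n => if (j:ℕ) ≤ k then p (D i (j:ℕ)) else q (D i ((j:ℕ)-1))) := by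
  rw [show k+(i+1) = i+k+1 by omega]
  refine congrArg _ (congrArg F (funext fun j => ?_))
  rcases le_or_gt (j:ℕ) k with hj | hj
  · have h1 : (j:ℕ) < i+1 := by omega
    have h2 : (j:ℕ) < i := by omega
    simp [Z, D, hj, h1, h2]
  · rcases Nat.lt_or_ge (j:ℕ) (i+1) with h1 | h1
    · have h2 : ¬ ((j:ℕ) ≤ k) := by omega
      have h3 : (j:ℕ) - 1 < i := by omega
      simp [Z, D, h1, h2, h3]
    · have h2 : ¬ ((j:ℕ) < i + 1) := by omega
      have h3 : ¬ ((j:ℕ)+1 ≤ k) := by omega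
      have h4 : ¬ ((j:ℕ) ≤ k) := by omega
      have h5 : ¬ ((j:ℕ) - 1 < i) := by omega
      simp only [Z, D, if_neg h2, if_neg h3, if_neg h4, if_neg h5]
      congr 1
      omega

theorem core {M X : Type} [AddCommGroup M] (n : ℕ) (hn : 1 ≤ n)
    (F : (Fin n → X) → M) (p q : ℕ → X)
    (H : ∀ k, k < n → ∑ i ∈ range (n+1),
        ((-1:ℤ)^i) • F (fun j : Fin n => Z p q k (D i (j:ℕ))) = 0) :
    F (fun j => p (j:ℕ)) - F (fun j => q (j:ℕ))
      = ∑ i ∈ range n, ∑ m ∈ range (n-1), ((-1:ℤ)^(i+m+1)) •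
          F (fun j : Fin n => if (j:ℕ) ≤ m then p (D i (j:ℕ)) else q (D i ((j:ℕ)-1))) := by
  set f : ℕ → ℕ → M := fun k i => ((-1:ℤ)^(k+i)) • F (fun j : Fin n => Z p q k (D i (j:ℕ)))
    with hf
  set w : ℕ → ℕ → M := fun i m => ((-1:ℤ)^(i+m+1)) •
      F (fun j : Fin n => if (j:ℕ) ≤ m then p (D i (j:ℕ)) else q (D i ((j:ℕ)-1))) with hw
  set A : ℕ → M := fun k => F (fun j : Fin n => if (j:ℕ) < k then p (j:ℕ) else q (j:ℕ)) with hA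
  -- the total sum vanishes
  have hS : ∑ k ∈ range n, ∑ i ∈ range (n+1), f k i = 0 := by
    refine Finset.sum_eq_zero fun k hk => ?_
    rw [mem_range] at hk
    calc ∑ i ∈ range (n+1), f k i
        = ((-1:ℤ)^k) • ∑ i ∈ range (n+1), ((-1:ℤ)^i) • F (fun j : Fin n => Z p q k (D i (j:ℕ))) := by
          rw [Finset.smul_sum]
          refine Finset.sum_congr rfl fun i _ => ?_
          rw [smul_smul, ← pow_add]
      _ = 0 := by rw [H k hk, smul_zero]
  -- decomposition of the inner sum
  have hsplit : ∀ k ∈ range n, ∑ i ∈ range (n+1), f k i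
      = (∑ i ∈ range k, f k i) + ((f k k + f k (k+1)) + ∑ i ∈ Ico (k+2) (n+1), f k i) := by
    intro k hk
    rw [mem_range] at hk
    rw [range_eq_Ico, ← Finset.sum_Ico_consecutive _ (Nat.zero_le k) (by omega : k ≤ n+1),
      ← Finset.sum_Ico_consecutive _ (by omega : k ≤ k+2) (by omega : k+2 ≤ n+1),
      ← range_eq_Ico]
    congr 2
    rw [show k + 2 = (k+1)+1 from rfl, Finset.sum_Ico_succ_top (by omega),
      Finset.sum_Ico_succ_top (by omega), Finset.Ico_self, Finset.sum_empty, zero_add]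
  have hS2 : (∑ k ∈ range n, ∑ i ∈ range k, f k i)
      + ((∑ k ∈ range n, (f k k + f k (k+1)))
        + ∑ k ∈ range n, ∑ i ∈ Ico (k+2) (n+1), f k i) = 0 := by
    have h := hS
    rw [Finset.sum_congr rfl hsplit, Finset.sum_add_distrib, Finset.sum_add_distrib] at h
    exact h
  -- middle sum telescopes
  have hmid : ∑ k ∈ range n, (f k k + f k (k+1)) = A 0 - A n := by
    rw [Finset.sum_congr rfl fun k _ => mid n F p q k]
    exact Finset.sum_range_sub' A n
  have hA0 : A 0 = F (fun j => q (j:ℕ)) := by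
    simp only [hA, Nat.not_lt_zero, if_false]
  have hAn : A n = F (fun j => p (j:ℕ)) := by
    simp only [hA]
    refine congrArg F (funext fun j => ?_)
    rw [if_pos j.isLt]
  -- first cross sum
  have hc : ∑ k ∈ range n, ∑ i ∈ range k, f k i
      = ∑ m ∈ range (n-1), ∑ i ∈ range (m+1), w i m := by
    have h1 : range n = range ((n-1)+1) := by congr 1; omega
    rw [h1, Finset.sum_range_succ']
    simp only [range_zero, Finset.sum_empty, add_zero]
    refine Finset.sum_congr rfl fun m _ => Finset.sum_congr rfl fun i hi => ?_
    rw [mem_range] at hi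
    exact cross1 n F p q m i (by omega)
  -- second cross sum
  have hd : ∑ k ∈ range n, ∑ i ∈ Ico (k+2) (n+1), f k i
      = ∑ k ∈ range (n-1), ∑ i ∈ Ico (k+1) n, w i k := by
    have hd1 : ∀ k, ∑ i ∈ Ico (k+2) (n+1), f k i = ∑ i ∈ Ico (k+1) n, f k (i+1) := by
      intro k
      rw [Finset.sum_Ico_eq_sum_range, Finset.sum_Ico_eq_sum_range,
        show n + 1 - (k+2) = n - (k+1) by omega]
      refine Finset.sum_congr rfl fun i _ => ?_
      congr 1
      omega
    rw [Finset.sum_congr rfl fun k _ => hd1 k]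
    have h1 : range n = range ((n-1)+1) := by congr 1; omega
    rw [h1, Finset.sum_range_succ, show (n-1)+1 = n by omega, Finset.Ico_self,
      Finset.sum_empty, add_zero]
    refine Finset.sum_congr rfl fun k hk => Finset.sum_congr rfl fun i hi => ?_
    rw [mem_Ico] at hi
    exact cross2 n F p q k i (by omega)
  -- combine the cross sums
  have hcd : (∑ m ∈ range (n-1), ∑ i ∈ range (m+1), w i m)
      + ∑ k ∈ range (n-1), ∑ i ∈ Ico (k+1) n, w i k
      = ∑ i ∈ range n, ∑ m ∈ range (n-1), w i m := by
    rw [← Finset.sum_add_distrib]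
    rw [Finset.sum_congr rfl (fun m hm => ?_), Finset.sum_comm]
    rw [mem_range] at hm
    rw [range_eq_Ico, Finset.sum_Ico_consecutive _ (Nat.zero_le (m+1)) (by omega : m+1 ≤ n),
      ← range_eq_Ico]
  -- conclude
  rw [hmid, hA0, hAn, hc, hd] at hS2
  have hS3 : ((F fun j => q (j:ℕ)) - F fun j => p (j:ℕ))
      + ∑ i ∈ range n, ∑ m ∈ range (n-1), w i m = 0 := by
    rw [← hcd, ← hS2]; abel
  have h4 := eq_neg_of_add_eq_zero_right hS3
  rw [neg_sub] at h4
  exact h4.symm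

def extg {G : Type} [One G] {m : ℕ} (gs : Fin m → G) : ℕ → G :=
  fun t => if h : t < m then gs ⟨t, h⟩ else 1

end Stmt8Aux

open Stmt8Aux Finset in


/-- If `G` acts transitively on `X`, `M` is a `G`-module, and `F : Xⁿ → M` is a
`G`-equivariant function satisfying the alternating-sum relation, then
`f_x(g₁,…,g_n) = F(g₁⁻¹x,…,g_n⁻¹x)` is a homogeneous `(n−1)`-cocycle of `G` with values
in `M`, and its cohomology class does not depend on the basepoint `x` (the difference
of the cocycles attached to two basepoints is the coboundary of an equivariant
`(n−2)`-cochain). -/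
theorem stmt_8 (G : Type) [Group G] (X : Type) [MulAction G X]
    [MulAction.IsPretransitive G X]
    (M : Type) [AddCommGroup M] [DistribMulAction G M]
    (n : ℕ) (hn : 1 ≤ n) (F : (Fin n → X) → M)
    (hequiv : ∀ (g : G) (x : Fin n → X), F (fun i => g • x i) = g • F x)
    (hrel : ∀ x : Fin (n + 1) → X,
      ∑ i : Fin (n + 1), ((-1 : ℤ) ^ (i : ℕ)) • F (fun j => x (i.succAbove j)) = 0)
    (x : X) :
    -- homogeneity of f_x
    (∀ (g : G) (gs : Fin n → G),
        F (fun i => (gs i * g⁻¹)⁻¹ • x) = g • F (fun i => (gs i)⁻¹ • x)) ∧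
    -- cocycle relation for f_x
    (∀ gs : Fin (n + 1) → G,
        ∑ i : Fin (n + 1), ((-1 : ℤ) ^ (i : ℕ)) • F (fun j => (gs (i.succAbove j))⁻¹ • x) = 0) ∧
    -- independence of the cohomology class of f_x on the basepoint
    (∀ y : X, ∃ h : (Fin (n - 1) → G) → M,
        (∀ (g : G) (gs : Fin (n - 1) → G), h (fun i => gs i * g⁻¹) = g • h gs) ∧
        ∀ gs : Fin n → G,
          F (fun i => (gs i)⁻¹ • x) - F (fun i => (gs i)⁻¹ • y)
            = ∑ i : Fin n, ((-1 : ℤ) ^ (i : ℕ)) •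
                h (fun j => gs (Fin.cast (Nat.succ_pred_eq_of_pos hn)
                    ((Fin.cast (Nat.succ_pred_eq_of_pos hn).symm i).succAbove j)))) := by
  refine ⟨?_, ?_, ?_⟩
  · intro g gs
    have e : (fun i => (gs i * g⁻¹)⁻¹ • x) = fun i => g • ((gs i)⁻¹ • x) :=
      funext fun i => by rw [mul_inv_rev, inv_inv, mul_smul]
    rw [e, hequiv]
  · intro gs
    exact hrel (fun t : Fin (n+1) => (gs t)⁻¹ • x)
  · intro y
    refine ⟨fun gs' => ∑ m ∈ range (n-1), ((-1:ℤ)^(m+1)) •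
        F (fun j : Fin n => if (j:ℕ) ≤ m then (extg gs' (j:ℕ))⁻¹ • x
          else (extg gs' ((j:ℕ)-1))⁻¹ • y), ?_, ?_⟩
    · -- equivariance of h
      intro g gs'
      rw [Finset.smul_sum]
      refine Finset.sum_congr rfl fun m hm => ?_
      rw [mem_range] at hm
      have e : (fun j : Fin n => if (j:ℕ) ≤ m then (extg (fun i => gs' i * g⁻¹) (j:ℕ))⁻¹ • x
            else (extg (fun i => gs' i * g⁻¹) ((j:ℕ)-1))⁻¹ • y)
          = fun j : Fin n => g • (if (j:ℕ) ≤ m then (extg gs' (j:ℕ))⁻¹ • x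
            else (extg gs' ((j:ℕ)-1))⁻¹ • y) := by
        funext j
        by_cases hj : (j:ℕ) ≤ m
        · have h1 : (j:ℕ) < n - 1 := by omega
          simp only [if_pos hj, extg, dif_pos h1, mul_inv_rev, inv_inv, mul_smul]
        · have hjn := j.isLt
          have h1 : (j:ℕ) - 1 < n - 1 := by omega
          simp only [if_neg hj, extg, dif_pos h1, mul_inv_rev, inv_inv, mul_smul]
      rw [e, hequiv]
      exact smul_comm _ _ _
    · -- the coboundary identity
      intro gs
      have hface : ∀ (i : Fin n) (t : ℕ), t < n - 1 →
          extg (fun j : Fin (n-1) => gs (Fin.cast (Nat.succ_pred_eq_of_pos hn)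
            ((Fin.cast (Nat.succ_pred_eq_of_pos hn).symm i).succAbove j))) t
          = extg gs (D (i:ℕ) t) := by
        intro i t ht
        have hD : D (i:ℕ) t < n := by
          have := i.isLt
          simp only [D]; split_ifs <;> omega
        simp only [extg, dif_pos ht, dif_pos hD]
        congr 1
        apply Fin.ext
        simp only [Fin.coe_cast]
        rw [succAbove_val]
        simp [Fin.coe_cast]
      set p : ℕ → X := fun t => (extg gs t)⁻¹ • x with hp
      set q : ℕ → X := fun t => (extg gs t)⁻¹ • y with hq
      have H : ∀ k, k < n → ∑ i ∈ range (n+1),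
          ((-1:ℤ)^i) • F (fun j : Fin n => Z p q k (D i (j:ℕ))) = 0 := by
        intro k hk
        rw [← Fin.sum_univ_eq_sum_range
          (fun i => ((-1:ℤ)^i) • F (fun j : Fin n => Z p q k (D i (j:ℕ)))) (n+1)]
        calc ∑ i : Fin (n+1), ((-1:ℤ)^(i:ℕ)) • F (fun j : Fin n => Z p q k (D (i:ℕ) (j:ℕ)))
            = ∑ i : Fin (n+1), ((-1:ℤ)^(i:ℕ)) •
                F (fun j : Fin n => Z p q k ((i.succAbove j : Fin (n+1)) : ℕ)) := by
              refine Finset.sum_congr rfl fun i _ => ?_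
              congr 1
              exact congrArg F (funext fun j => by rw [succAbove_val])
          _ = 0 := hrel (fun t : Fin (n+1) => Z p q k (t:ℕ))
      have hcore := core n hn F p q H
      have hl1 : F (fun j : Fin n => p (j:ℕ)) = F (fun i => (gs i)⁻¹ • x) :=
        congrArg F (funext fun j => by simp [hp, extg, j.isLt])
      have hl2 : F (fun j : Fin n => q (j:ℕ)) = F (fun i => (gs i)⁻¹ • y) :=
        congrArg F (funext fun j => by simp [hq, extg, j.isLt])
      rw [hl1, hl2] at hcore
      rw [hcore, ← Fin.sum_univ_eq_sum_range
        (fun i => ∑ m ∈ range (n-1), ((-1:ℤ)^(i+m+1)) •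
          F (fun j : Fin n => if (j:ℕ) ≤ m then p (D i (j:ℕ)) else q (D i ((j:ℕ)-1)))) n]
      refine Finset.sum_congr rfl fun i _ => ?_
      rw [Finset.smul_sum]
      refine Finset.sum_congr rfl fun m hm => ?_
      rw [mem_range] at hm
      rw [smul_smul, ← pow_add]
      congr 1
      refine congrArg F (funext fun j => ?_)
      have hjn := j.isLt
      by_cases hj : (j:ℕ) ≤ m
      · rw [if_pos hj, if_pos hj, hface i (j:ℕ) (by omega)]
      · rw [if_neg hj, if_neg hj, hface i ((j:ℕ)-1) (by omega)]
end
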